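/- Let ξ be any policy on the augmented MDP (allowed to take the fictitious action a⁺ anywhere), and let ξ̲ be its restriction to the original MDP obtained by redistributing the probability mass that ξ places on a⁺ uniformly over the real actions A. Then for all states x, V^{ξ̲}(x) ≥ V̄^{ξ}(x): the restricted policy in the original MDP achieves value at least that of ξ in the augmented MDP. -/
import Mathlib


open scoped ENNReal
open Classical

/-- Expectation of a real-valued function under a probability mass function. -/
noncomputable def pexp {σ : Type*} (p : PMF σ) (φ : σ → ℝ) : ℝ :=
  ∑' s, (p s).toReal * φ s

/-- Transition kernel of the action-augmented MDP: states `Option X` (with `none` the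
absorbing state `s⁺`), actions `Option A` (with `none` the fictitious action `a⁺`).
Taking `a⁺` always transitions to `s⁺`; real actions follow the original dynamics;
`s⁺` is absorbing. -/
noncomputable def augP {X A : Type*} (P : X → A → PMF X) :
    Option X → Option A → PMF (Option X)
  | some x, some a => (P x a).map some
  | _, _ => PMF.pure none

/-- Reward of the action-augmented MDP: reward `1` exactly when taking the fictitious
action `a⁺` at a goal state; all other rewards are `0`. -/
noncomputable def augR {X A : Type*} (G : Set X) : Option X → Option A → ℝ
  | some x, none => if x ∈ G then 1 else 0
  | _, _ => 0

/-- Extension `π̄` of a policy `π` to the augmented MDP: play the fictitious action `a⁺`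
exactly on goal states, otherwise follow `π`. -/
noncomputable def extPi {X A : Type*} (G : Set X) (π : X → PMF A) :
    Option X → PMF (Option A)
  | some x => if x ∈ G then PMF.pure none else (π x).map some
  | none => PMF.pure none

section helpers
variable {σ : Type*} [Fintype σ]

lemma pexp_eq_sum (p : PMF σ) (φ : σ → ℝ) : pexp p φ = ∑ s, (p s).toReal * φ s :=
  tsum_fintype _

lemma pmf_sum_toReal (p : PMF σ) : ∑ s, (p s).toReal = 1 := by
  have h := p.tsum_coe
  rw [tsum_fintype] at h
  rw [← ENNReal.toReal_sum (fun a _ => p.apply_ne_top a), h, ENNReal.toReal_one]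

lemma pexp_const (p : PMF σ) (c : ℝ) : pexp p (fun _ => c) = c := by
  rw [pexp_eq_sum, ← Finset.sum_mul, pmf_sum_toReal, one_mul]

lemma pexp_mono (p : PMF σ) {φ ψ : σ → ℝ} (h : ∀ s, φ s ≤ ψ s) : pexp p φ ≤ pexp p ψ := by
  rw [pexp_eq_sum, pexp_eq_sum]
  exact Finset.sum_le_sum fun s _ => mul_le_mul_of_nonneg_left (h s) ENNReal.toReal_nonneg

lemma pexp_le_of (p : PMF σ) {φ : σ → ℝ} {c : ℝ} (h : ∀ s, φ s ≤ c) : pexp p φ ≤ c := by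
  calc pexp p φ ≤ pexp p (fun _ => c) := pexp_mono p h
  _ = c := pexp_const p c

lemma le_pexp_of (p : PMF σ) {φ : σ → ℝ} {c : ℝ} (h : ∀ s, c ≤ φ s) : c ≤ pexp p φ := by
  calc c = pexp p (fun _ => c) := (pexp_const p c).symm
  _ ≤ pexp p φ := pexp_mono p h

lemma pexp_add_const (p : PMF σ) (φ : σ → ℝ) (c : ℝ) :
    pexp p (fun s => φ s + c) = pexp p φ + c := by
  rw [pexp_eq_sum, pexp_eq_sum]
  simp_rw [mul_add]
  rw [Finset.sum_add_distrib, ← Finset.sum_mul, pmf_sum_toReal, one_mul]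

lemma pexp_pure (s0 : σ) (φ : σ → ℝ) : pexp (PMF.pure s0) φ = φ s0 := by
  rw [pexp_eq_sum]
  simp [PMF.pure_apply, ite_mul, apply_ite ENNReal.toReal]

lemma pexp_map_some {X : Type*} [Fintype X] (p : PMF X) (φ : Option X → ℝ) :
    pexp (p.map some) φ = pexp p (fun y => φ (some y)) := by
  rw [pexp_eq_sum, pexp_eq_sum, Fintype.sum_option]
  have h0 : p.map some none = 0 := by simp [PMF.map_apply]
  have h1 : ∀ y, p.map some (some y) = p y := by
    intro y
    simp only [PMF.map_apply, Option.some.injEq]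
    rw [tsum_eq_single y (fun b hb => by simp [Ne.symm hb])]
    simp
  simp [h0, h1]

end helpers

/-- Let `ξ` be any policy on the augmented MDP and `ξr = ξ̲` its
restriction to the original MDP, obtained by redistributing the probability mass that
`ξ` places on the fictitious action `a⁺` uniformly over the real actions `A`. Then for
every state `x`, `V^{ξ̲}(x) ≥ V̄^{ξ}(x)`. `Qr` (value of `ξ̲` in the original
goal-oriented MDP with termination at `G`) and `Qξ` (value of `ξ` in the augmented MDP)
are characterized by their Bellman equations. -/
theorem stmt3 {X A : Type*} [Fintype X] [Fintype A] [Nonempty A]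
    (G : Set X) (P : X → A → PMF X)
    (γ : ℝ) (hγ0 : 0 ≤ γ) (hγ1 : γ < 1)
    (ξ : Option X → PMF (Option A)) (ξr : X → PMF A)
    (hres : ∀ x a, ξr x a =
      ξ (some x) (some a) + ξ (some x) none / (Fintype.card A : ℝ≥0∞))
    (Qr : X → A → ℝ) (Qξ : Option X → Option A → ℝ)
    (hQr : ∀ x a, Qr x a =
      if x ∈ G then 1 else γ * pexp (P x a) (fun x' => pexp (ξr x') (Qr x')))
    (hQξ : ∀ ox oa, Qξ ox oa =
      augR G ox oa + γ * pexp (augP P ox oa) (fun ox' => pexp (ξ ox') (Qξ ox'))) :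
    ∀ x : X, pexp (ξ (some x)) (Qξ (some x)) ≤ pexp (ξr x) (Qr x) := by
  intro x0
  haveI : Nonempty X := ⟨x0⟩
  -- value of the absorbing state is 0
  have hVnone : pexp (ξ none) (Qξ none) = 0 := by
    have hc : Qξ (none : Option X) = fun _ => γ * pexp (ξ none) (Qξ none) := by
      funext oa
      rw [hQξ]
      have hR : augR G (none : Option X) oa = 0 := by cases oa <;> rfl
      have hP : augP P (none : Option X) oa = PMF.pure none := by cases oa <;> rfl
      rw [hR, hP, pexp_pure, zero_add]
    have h2 : pexp (ξ none) (Qξ none) = γ * pexp (ξ none) (Qξ none) := by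
      conv_lhs => rw [hc, pexp_const]
    have h3 : (1 - γ) * pexp (ξ none) (Qξ none) = 0 := by linarith
    rcases mul_eq_zero.mp h3 with h | h
    · linarith
    · exact h
  -- Bellman equations at real states
  have hQsn : ∀ x : X, Qξ (some x) none = if x ∈ G then 1 else 0 := by
    intro x
    rw [hQξ]
    have hP : augP P (some x) (none : Option A) = PMF.pure none := rfl
    rw [hP, pexp_pure, hVnone, mul_zero, add_zero]
    rfl
  have hQss : ∀ (x : X) (a : A), Qξ (some x) (some a) =
      γ * pexp (P x a) (fun x' => pexp (ξ (some x')) (Qξ (some x'))) := by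
    intro x a
    rw [hQξ]
    have hP : augP P (some x) (some a) = (P x a).map some := rfl
    have hR : augR G (some x) (some a) = 0 := rfl
    rw [hP, hR, pexp_map_some, zero_add]
  -- bounds on Qr
  have hQr0 : ∀ x a, 0 ≤ Qr x a := by
    set m := Finset.univ.inf' Finset.univ_nonempty (fun p : X × A => Qr p.1 p.2) with hm
    have hmle : ∀ x a, m ≤ Qr x a := fun x a =>
      Finset.inf'_le (fun p : X × A => Qr p.1 p.2) (Finset.mem_univ (x, a))
    have hE : ∀ x a, m ≤ pexp (P x a) (fun x' => pexp (ξr x') (Qr x')) := by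
      intro x a
      exact le_pexp_of _ (fun x' => le_pexp_of _ (fun a' => hmle x' a'))
    obtain ⟨p, -, hp⟩ :=
      Finset.exists_mem_eq_inf' Finset.univ_nonempty (fun p : X × A => Qr p.1 p.2)
    have h0m : 0 ≤ m := by
      by_cases hg : p.1 ∈ G
      · rw [hm, hp, hQr]; simp [hg]
      · have h1 := hE p.1 p.2
        have hmeq : m = γ * pexp (P p.1 p.2) (fun x' => pexp (ξr x') (Qr x')) := by
          rw [hm, hp, hQr]; simp [hg]
        nlinarith [mul_nonneg hγ0 (sub_nonneg.mpr h1)]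
    exact fun x a => le_trans h0m (hmle x a)
  have hQr1 : ∀ x a, Qr x a ≤ 1 := by
    set m := Finset.univ.sup' Finset.univ_nonempty (fun p : X × A => Qr p.1 p.2) with hm
    have hmle : ∀ x a, Qr x a ≤ m := fun x a =>
      Finset.le_sup' (fun p : X × A => Qr p.1 p.2) (Finset.mem_univ (x, a))
    have hE : ∀ x a, pexp (P x a) (fun x' => pexp (ξr x') (Qr x')) ≤ m := by
      intro x a
      exact pexp_le_of _ (fun x' => pexp_le_of _ (fun a' => hmle x' a'))
    obtain ⟨p, -, hp⟩ :=
      Finset.exists_mem_eq_sup' Finset.univ_nonempty (fun p : X × A => Qr p.1 p.2)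
    have h1m : m ≤ 1 := by
      by_cases hg : p.1 ∈ G
      · rw [hm, hp, hQr]; simp [hg]
      · have h1 := hE p.1 p.2
        have hmeq : m = γ * pexp (P p.1 p.2) (fun x' => pexp (ξr x') (Qr x')) := by
          rw [hm, hp, hQr]; simp [hg]
        nlinarith [mul_nonneg hγ0 (sub_nonneg.mpr h1)]
    exact fun x a => le_trans (hmle x a) h1m
  have hVr0 : ∀ x, 0 ≤ pexp (ξr x) (Qr x) := fun x => le_pexp_of _ (fun a => hQr0 x a)
  have hVr1 : ∀ x, pexp (ξr x) (Qr x) ≤ 1 := fun x => pexp_le_of _ (fun a => hQr1 x a)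
  -- contraction setup
  set M := Finset.univ.sup' Finset.univ_nonempty
      (fun x : X => pexp (ξ (some x)) (Qξ (some x)) - pexp (ξr x) (Qr x)) with hM
  have hDM : ∀ x : X, pexp (ξ (some x)) (Qξ (some x)) - pexp (ξr x) (Qr x) ≤ M :=
    fun x => Finset.le_sup'
      (fun x : X => pexp (ξ (some x)) (Qξ (some x)) - pexp (ξr x) (Qr x))
      (Finset.mem_univ x)
  have hmax0 : (0:ℝ) ≤ max M 0 := le_max_right M 0
  have hVb : ∀ x' : X, pexp (ξ (some x')) (Qξ (some x')) ≤ max M 0 + 1 := by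
    intro x'
    have := hDM x'
    have := hVr1 x'
    have := le_max_left M 0
    linarith
  have hVWb : ∀ x' : X,
      pexp (ξ (some x')) (Qξ (some x')) ≤ pexp (ξr x') (Qr x') + max M 0 := by
    intro x'
    have := hDM x'
    have := le_max_left M 0
    linarith
  have key : ∀ x : X,
      pexp (ξ (some x)) (Qξ (some x)) - pexp (ξr x) (Qr x) ≤ γ * max M 0 := by
    intro x
    -- weights
    have hw0 : ∀ oa, (0:ℝ) ≤ (ξ (some x) oa).toReal := fun _ => ENNReal.toReal_nonneg
    have hS0 : (0:ℝ) ≤ ∑ a, (ξ (some x) (some a)).toReal :=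
      Finset.sum_nonneg fun a _ => hw0 _
    have hsum1 : (ξ (some x) none).toReal + ∑ a, (ξ (some x) (some a)).toReal = 1 := by
      have h := pmf_sum_toReal (ξ (some x))
      rwa [Fintype.sum_option] at h
    have hS1 : ∑ a, (ξ (some x) (some a)).toReal ≤ 1 := by
      have := hw0 (none : Option A); linarith
    -- expansion of V(some x)
    have hVx : pexp (ξ (some x)) (Qξ (some x)) =
        (ξ (some x) none).toReal * (if x ∈ G then 1 else 0)
        + ∑ a, (ξ (some x) (some a)).toReal *
            (γ * pexp (P x a) (fun x' => pexp (ξ (some x')) (Qξ (some x')))) := by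
      rw [pexp_eq_sum, Fintype.sum_option]
      congr 1
      · rw [hQsn]
      · exact Finset.sum_congr rfl fun a _ => by rw [hQss]
    -- expansion of restricted weights
    have hwr : ∀ a : A, (ξr x a).toReal =
        (ξ (some x) (some a)).toReal
          + (ξ (some x) none).toReal / (Fintype.card A : ℝ) := by
      intro a
      have hne : (Fintype.card A : ℝ≥0∞) ≠ 0 :=
        Nat.cast_ne_zero.mpr Fintype.card_ne_zero
      rw [hres, ENNReal.toReal_add (PMF.apply_ne_top _ _)
          ((ENNReal.div_lt_top (PMF.apply_ne_top _ _) hne).ne),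
        ENNReal.toReal_div]
      simp
    have hc0 : (0:ℝ) ≤ (ξ (some x) none).toReal / (Fintype.card A : ℝ) := by
      apply div_nonneg (hw0 _)
      positivity
    by_cases hg : x ∈ G
    · -- goal state
      have hVr1x : pexp (ξr x) (Qr x) = 1 := by
        have hq : Qr x = fun _ => (1:ℝ) := funext fun a => by rw [hQr]; simp [hg]
        rw [hq, pexp_const]
      have hVxle : pexp (ξ (some x)) (Qξ (some x)) ≤
          (ξ (some x) none).toReal
          + (∑ a, (ξ (some x) (some a)).toReal) * (γ * (max M 0 + 1)) := by
        rw [hVx, if_pos hg, mul_one, Finset.sum_mul]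
        gcongr with a _
        exact pexp_le_of _ fun x' => hVb x'
      rw [hVr1x]
      nlinarith [mul_nonneg hS0 (mul_nonneg hγ0 hmax0),
        mul_le_mul_of_nonneg_right hS1 (mul_nonneg hγ0 hmax0)]
    · -- non-goal state
      have hF0 : ∀ a : A, 0 ≤ pexp (P x a) (fun x' => pexp (ξr x') (Qr x')) :=
        fun a => le_pexp_of _ fun x' => hVr0 x'
      have hEF : ∀ a : A,
          pexp (P x a) (fun x' => pexp (ξ (some x')) (Qξ (some x')))
            ≤ pexp (P x a) (fun x' => pexp (ξr x') (Qr x')) + max M 0 := by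
        intro a
        calc pexp (P x a) (fun x' => pexp (ξ (some x')) (Qξ (some x')))
            ≤ pexp (P x a) (fun x' => pexp (ξr x') (Qr x') + max M 0) :=
              pexp_mono _ fun x' => hVWb x'
          _ = pexp (P x a) (fun x' => pexp (ξr x') (Qr x')) + max M 0 :=
              pexp_add_const _ _ _
      have hVxle : pexp (ξ (some x)) (Qξ (some x)) ≤
          (∑ a, (ξ (some x) (some a)).toReal *
            (γ * pexp (P x a) (fun x' => pexp (ξr x') (Qr x'))))
          + (∑ a, (ξ (some x) (some a)).toReal) * (γ * max M 0) := by
        rw [hVx, if_neg hg, mul_zero, zero_add, Finset.sum_mul, ← Finset.sum_add_distrib]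
        apply Finset.sum_le_sum
        intro a _
        have h1 := hEF a
        have h2 := hw0 (some a)
        nlinarith [mul_le_mul_of_nonneg_left
          (mul_le_mul_of_nonneg_left h1 hγ0) (hw0 (some a))]
      have hVrge : (∑ a, (ξ (some x) (some a)).toReal *
            (γ * pexp (P x a) (fun x' => pexp (ξr x') (Qr x'))))
          ≤ pexp (ξr x) (Qr x) := by
        rw [pexp_eq_sum]
        apply Finset.sum_le_sum
        intro a _
        rw [hwr a, hQr x a, if_neg hg]
        have := hF0 a
        nlinarith [mul_nonneg hc0 (mul_nonneg hγ0 (hF0 a))]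
      have hfin : (∑ a, (ξ (some x) (some a)).toReal) * (γ * max M 0) ≤ γ * max M 0 := by
        nlinarith [mul_le_mul_of_nonneg_right hS1 (mul_nonneg hγ0 hmax0)]
      linarith
  -- conclude: M ≤ 0
  obtain ⟨xm, -, hxm⟩ := Finset.exists_mem_eq_sup' Finset.univ_nonempty
      (fun x : X => pexp (ξ (some x)) (Qξ (some x)) - pexp (ξr x) (Qr x))
  have hMle : M ≤ γ * max M 0 := by
    calc M = _ := hM.trans hxm
    _ ≤ γ * max M 0 := key xm
  have hM0 : M ≤ 0 := by
    by_contra h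
    push_neg at h
    rw [max_eq_left h.le] at hMle
    nlinarith
  have := hDM x0
  linarith
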